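/- Let q be an odd prime power, K a finite field with q² elements, f : K → K a planar function, and κ : K → K an additive map (write κ(x) = x̄) such that κ ∘ κ = id, κ(f(x)) = f(κ(x)) for all x, and for every x ∈ K exactly q elements y ∈ K satisfy y + κ(y) = f(x + κ(x)). Then: (i) for all x, y, u, v ∈ K, y = f(u+x) − v if and only if κ(v) = f(κ(x) + κ(u)) − κ(y); hence the map sending the affine point (x,y) to the line L_{κ(x),κ(y)}, the point (a) to the line N_{κ(a)}, and (∞) to the line at infinity, is a polarity of the shift plane Π(f); (ii) the set of its absolute points is U = {(x,y) ∈ K × K : y + κ(y) = f(x + κ(x))} ∪ {(∞)}, it has exactly q³ + 1 elements, and it is a unital in Π(f) (the polarity is unitary). -/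
import Mathlib


/-- The point set of the shift plane `Π(f)`: affine points `(x,y)`, points at
infinity `(a)` for `a ∈ K`, and the point `(∞)`. -/
abbrev ShiftPt (K : Type) : Type := (K × K) ⊕ (K ⊕ Unit)

/-- The affine line `L_{a,b} = {(x, f(x+a) − b) : x ∈ K} ∪ {(a)}` of the shift plane. -/
def affLine (K : Type) [Field K] (f : K → K) (a b : K) : Set (ShiftPt K) :=
  {P | (∃ x : K, P = Sum.inl (x, f (x + a) - b)) ∨ P = Sum.inr (Sum.inl a)}

/-- The vertical line `N_a = {(a,y) : y ∈ K} ∪ {(∞)}` of the shift plane. -/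
def vertLine (K : Type) [Field K] (a : K) : Set (ShiftPt K) :=
  {P | (∃ y : K, P = Sum.inl (a, y)) ∨ P = Sum.inr (Sum.inr ())}

/-- The line at infinity of the shift plane. -/
def lineAtInf (K : Type) : Set (ShiftPt K) :=
  {P | ∃ s : K ⊕ Unit, P = Sum.inr s}

/-- The set of all lines of the shift plane `Π(f)`. -/
def shiftLines (K : Type) [Field K] (f : K → K) : Set (Set (ShiftPt K)) :=
  {L | (∃ a b : K, L = affLine K f a b) ∨ (∃ a : K, L = vertLine K a) ∨ L = lineAtInf K}

/-- The set `θF = {tθ : t ∈ F}`, where `F = {t : t^q = t}` is the subfield of order `q`. -/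
def scalarSet (K : Type) [Field K] (q : ℕ) (θ : K) : Set K :=
  {c | ∃ t : K, t ^ q = t ∧ c = t * θ}

/-- The point set `U_θ = {(x, tθ) : x ∈ K, t ∈ F} ∪ {(∞)}`. -/
def unitalSet (K : Type) [Field K] (q : ℕ) (θ : K) : Set (ShiftPt K) :=
  {P | (∃ x t : K, t ^ q = t ∧ P = Sum.inl (x, t * θ)) ∨ P = Sum.inr (Sum.inr ())}

/-- The polarity `ρ` of `Π(f)` induced by `κ`: it sends the affine point `(x,y)` to
the line `L_{κ(x),κ(y)}`, the point `(a)` to the line `N_{κ(a)}`, and `(∞)` to the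
line at infinity. -/
def shiftPolarity (K : Type) [Field K] (f : K → K) (κ : K → K) :
    ShiftPt K → Set (ShiftPt K)
  | Sum.inl (x, y) => affLine K f (κ x) (κ y)
  | Sum.inr (Sum.inl a) => vertLine K (κ a)
  | Sum.inr (Sum.inr _) => lineAtInf K

/-- The set of absolute points `U = {(x,y) : y + κ(y) = f(x + κ(x))} ∪ {(∞)}`. -/
def absSet (K : Type) [Field K] (f : K → K) (κ : K → K) : Set (ShiftPt K) :=
  {P | (∃ x y : K, y + κ y = f (x + κ x) ∧ P = Sum.inl (x, y)) ∨
       P = Sum.inr (Sum.inr ())}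

section S
set_option linter.unusedSectionVars false

variable {K : Type} [Field K] {f : K → K} {a b x y : K}

lemma mem_affLine_inl : Sum.inl (x,y) ∈ affLine K f a b ↔ y = f (x + a) - b := by
  simp [affLine, Prod.ext_iff, eq_comm]
lemma mem_affLine_inf : (Sum.inr (Sum.inl x) : ShiftPt K) ∈ affLine K f a b ↔ x = a := by
  simp [affLine]
lemma mem_affLine_infty (u : Unit) : (Sum.inr (Sum.inr u) : ShiftPt K) ∈ affLine K f a b ↔ False := by
  cases u; simp [affLine]
lemma mem_vertLine_inl : (Sum.inl (x,y) : ShiftPt K) ∈ vertLine K a ↔ x = a := by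
  simp [vertLine, Prod.ext_iff, eq_comm]
lemma mem_vertLine_inf : (Sum.inr (Sum.inl x) : ShiftPt K) ∈ vertLine K a ↔ False := by
  simp [vertLine]
lemma mem_vertLine_infty (u : Unit) : (Sum.inr (Sum.inr u) : ShiftPt K) ∈ vertLine K a := by
  cases u; simp [vertLine]
lemma mem_lineAtInf_inl : (Sum.inl (x,y) : ShiftPt K) ∈ lineAtInf K ↔ False := by
  simp [lineAtInf]
lemma mem_lineAtInf_inr (s : K ⊕ Unit) : (Sum.inr s : ShiftPt K) ∈ lineAtInf K :=
  ⟨s, rfl⟩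

variable {κ : K → K} (hadd : ∀ x y : K, κ (x + y) = κ x + κ y)
  (hinv : ∀ x : K, κ (κ x) = x) (hcomm : ∀ x : K, κ (f x) = f (κ x))

include hadd in
lemma kzero : κ 0 = 0 := by
  have := hadd 0 0; simp at this; exact this

include hadd in
lemma ksub (u v : K) : κ (u - v) = κ u - κ v := by
  have h1 := hadd (u - v) v; simp at h1; linear_combination -h1

include hinv in
lemma kinj : Function.Injective κ := by
  intro u v h
  have := hinv u; rw [h, hinv] at this; exact this.symm

include hadd hinv hcomm in
lemma part1 : ∀ x y u v : K, y = f (u + x) - v ↔ κ v = f (κ x + κ u) - κ y := by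
  intro x y u v
  constructor
  · intro h
    have hv : v = f (u + x) - y := by linear_combination h
    rw [hv, ksub hadd, hcomm, hadd, add_comm (κ u)]
  · intro h
    have hy : κ y = f (κ x + κ u) - κ v := by linear_combination h
    have h2 : κ (κ y) = κ (f (κ x + κ u) - κ v) := by rw [hy]
    rw [hinv, ksub hadd, hcomm, hadd, hinv, hinv, hinv] at h2
    rw [add_comm x u] at h2
    linear_combination h2

include hadd hinv hcomm in
lemma kflip (u v : K) : u = κ v ↔ v = κ u := by
  constructor <;> (intro h; rw [h, hinv])

include hadd hinv hcomm in
lemma key (x y u v : K) : v = f (u + κ x) - κ y ↔ y = f (x + κ u) - κ v := by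
  have h := part1 hadd hinv hcomm (κ x) v u (κ y)
  rw [hinv, hinv] at h
  exact h

include hadd hinv hcomm in
lemma part2 : ∀ P Q : ShiftPt K, Q ∈ shiftPolarity K f κ P ↔ P ∈ shiftPolarity K f κ Q := by
  rintro (⟨x, y⟩ | (a | u)) (⟨x', y'⟩ | (a' | u')) <;>
    simp [shiftPolarity, mem_affLine_inl, mem_affLine_inf, mem_affLine_infty,
      mem_vertLine_inl, mem_vertLine_inf, mem_vertLine_infty, mem_lineAtInf_inl,
      mem_lineAtInf_inr]
  · exact key hadd hinv hcomm x y x' y'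
  · exact kflip hadd hinv hcomm a' x
  · exact kflip hadd hinv hcomm x' a


include hinv in
lemma part3 : ∀ P : ShiftPt K, shiftPolarity K f κ P ∈ shiftLines K f := by
  rintro (⟨x, y⟩ | (a | u))
  · exact Or.inl ⟨κ x, κ y, rfl⟩
  · exact Or.inr (Or.inl ⟨κ a, rfl⟩)
  · exact Or.inr (Or.inr rfl)

lemma affLine_ne_vertLine : affLine K f a b ≠ vertLine K x := by
  intro h
  have := (mem_vertLine_infty (a := x) (K := K) ())
  rw [← h] at this
  exact (mem_affLine_infty (a := a) (b := b) ()).mp this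

lemma affLine_ne_lineAtInf : affLine K f a b ≠ lineAtInf K := by
  intro h
  have : (Sum.inl (0, f (0 + a) - b) : ShiftPt K) ∈ affLine K f a b := Or.inl ⟨0, rfl⟩
  rw [h] at this
  exact (mem_lineAtInf_inl).mp this

lemma vertLine_ne_lineAtInf : vertLine K a ≠ lineAtInf K := by
  intro h
  have : (Sum.inl (a, 0) : ShiftPt K) ∈ vertLine K a := Or.inl ⟨0, rfl⟩
  rw [h] at this
  exact (mem_lineAtInf_inl).mp this

lemma affLine_inj {a' b' : K} (h : affLine K f a b = affLine K f a' b') : a = a' ∧ b = b' := by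
  have h1 : (Sum.inr (Sum.inl a) : ShiftPt K) ∈ affLine K f a b := Or.inr rfl
  rw [h] at h1
  have ha : a = a' := mem_affLine_inf.mp h1
  have h2 : (Sum.inl (0, f (0 + a) - b) : ShiftPt K) ∈ affLine K f a b := Or.inl ⟨0, rfl⟩
  rw [h] at h2
  have hb := mem_affLine_inl.mp h2
  subst ha
  exact ⟨rfl, by linear_combination -hb⟩

lemma vertLine_inj {a' : K} (h : vertLine K a = vertLine K a') : a = a' := by
  have h1 : (Sum.inl (a, 0) : ShiftPt K) ∈ vertLine K a := Or.inl ⟨0, rfl⟩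
  rw [h] at h1
  exact mem_vertLine_inl.mp h1

include hinv in
lemma part4 : Function.Injective (shiftPolarity K f κ) := by
  rintro (⟨x, y⟩ | (a | u)) (⟨x', y'⟩ | (a' | u')) h <;>
    simp only [shiftPolarity] at h
  · obtain ⟨h1, h2⟩ := affLine_inj h
    simp [kinj hinv h1, kinj hinv h2]
  · exact absurd h affLine_ne_vertLine
  · exact absurd h affLine_ne_lineAtInf
  · exact absurd h.symm affLine_ne_vertLine
  · simp [kinj hinv (vertLine_inj h)]
  · exact absurd h vertLine_ne_lineAtInf
  · exact absurd h.symm affLine_ne_lineAtInf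
  · exact absurd h.symm vertLine_ne_lineAtInf
  · cases u; cases u'; rfl

include hinv in
lemma part5 : ∀ L ∈ shiftLines K f, ∃ P : ShiftPt K, shiftPolarity K f κ P = L := by
  rintro L (⟨a, b, rfl⟩ | ⟨a, rfl⟩ | rfl)
  · exact ⟨Sum.inl (κ a, κ b), by show affLine K f _ _ = _; rw [hinv, hinv]⟩
  · exact ⟨Sum.inr (Sum.inl (κ a)), by show vertLine K _ = _; rw [hinv]⟩
  · exact ⟨Sum.inr (Sum.inr ()), rfl⟩

include hadd hinv hcomm in
lemma part6 : {P : ShiftPt K | P ∈ shiftPolarity K f κ P} = absSet K f κ := by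
  ext P
  rcases P with (⟨x, y⟩ | (a | u))
  · simp only [Set.mem_setOf_eq, shiftPolarity, mem_affLine_inl, absSet, Prod.ext_iff]
    constructor
    · intro h
      exact Or.inl ⟨x, y, by linear_combination h, rfl⟩
    · rintro (⟨x', y', hxy, h⟩ | h)
      · simp only [Sum.inl.injEq, Prod.ext_iff] at h
        obtain ⟨rfl, rfl⟩ := h
        linear_combination hxy
      · simp at h
  · simp only [Set.mem_setOf_eq, shiftPolarity, mem_vertLine_inf, absSet]
    simp
  · simp only [Set.mem_setOf_eq, shiftPolarity, absSet]
    cases u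
    simp [mem_lineAtInf_inr]

variable (hplanar : ∀ a : K, a ≠ 0 → Function.Bijective (fun x : K => f (x + a) - f x))

include hplanar hadd hinv hcomm in
lemma EU {Q R : ShiftPt K} (hne : Q ≠ R) :
    ∃! P : ShiftPt K, Q ∈ shiftPolarity K f κ P ∧ R ∈ shiftPolarity K f κ P := by
  rcases Q with (⟨x₁, y₁⟩ | (a₁ | w₁)) <;> rcases R with (⟨x₂, y₂⟩ | (a₂ | w₂))
  -- affine / affine
  · by_cases hx : x₁ = x₂
    · subst hx
      have hy : y₁ ≠ y₂ := fun h => hne (by rw [h])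
      refine ⟨Sum.inr (Sum.inl (κ x₁)), ⟨?_, ?_⟩, ?_⟩
      · simp only [shiftPolarity, mem_vertLine_inl, hinv]
      · simp only [shiftPolarity, mem_vertLine_inl, hinv]
      · rintro (⟨u, v⟩ | (c | w)) ⟨hQ, hR⟩ <;>
          simp only [shiftPolarity, mem_affLine_inl, mem_affLine_inf, mem_vertLine_inl,
            mem_lineAtInf_inl] at hQ hR
        · exact absurd (hQ.trans hR.symm) hy
        · simp only [Sum.inr.injEq, Sum.inl.injEq]
          rw [hQ, hinv]
    · have hd : x₁ - x₂ ≠ 0 := sub_ne_zero.mpr hx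
      obtain ⟨z₀, hz₀⟩ := (hplanar _ hd).2 (y₁ - y₂)
      simp only at hz₀
      refine ⟨Sum.inl (κ (z₀ - x₂), κ (f (x₁ + (z₀ - x₂)) - y₁)), ⟨?_, ?_⟩, ?_⟩
      · simp only [shiftPolarity, mem_affLine_inl, hinv]
        ring
      · simp only [shiftPolarity, mem_affLine_inl, hinv]
        have e1 : x₂ + (z₀ - x₂) = z₀ := by ring
        have e2 : x₁ + (z₀ - x₂) = z₀ + (x₁ - x₂) := by ring
        rw [e1, e2]
        linear_combination hz₀
      · rintro (⟨u, v⟩ | (c | w)) ⟨hQ, hR⟩ <;>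
          simp only [shiftPolarity, mem_affLine_inl, mem_affLine_inf, mem_vertLine_inl,
            mem_lineAtInf_inl] at hQ hR
        · have e : (x₂ + κ u) + (x₁ - x₂) = x₁ + κ u := by ring
          have hval : f ((x₂ + κ u) + (x₁ - x₂)) - f (x₂ + κ u) = y₁ - y₂ := by
            rw [e]; linear_combination hR - hQ
          have hzeq : x₂ + κ u = z₀ := (hplanar _ hd).1 (hval.trans hz₀.symm)
          have hku : κ u = z₀ - x₂ := by linear_combination hzeq
          have hu : u = κ (z₀ - x₂) := by rw [← hku, hinv]
          have hkv : κ v = f (x₁ + (z₀ - x₂)) - y₁ := by rw [← hku]; linear_combination hQ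
          have hv : v = κ (f (x₁ + (z₀ - x₂)) - y₁) := by rw [← hkv, hinv]
          simp only [Sum.inl.injEq, Prod.mk.injEq]
          exact ⟨hu, hv⟩
        · exact absurd (hQ.trans hR.symm) hx
  -- affine / infinity point (a₂)
  · refine ⟨Sum.inl (κ a₂, κ (f (x₁ + a₂) - y₁)), ⟨?_, ?_⟩, ?_⟩
    · simp only [shiftPolarity, mem_affLine_inl, hinv]
      ring
    · simp only [shiftPolarity, mem_affLine_inf, hinv]
    · rintro (⟨u, v⟩ | (c | w)) ⟨hQ, hR⟩ <;>
        simp only [shiftPolarity, mem_affLine_inl, mem_affLine_inf, mem_vertLine_inl,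
          mem_vertLine_inf, mem_lineAtInf_inl] at hQ hR
      have hku : κ u = a₂ := hR.symm
      have hu : u = κ a₂ := by rw [← hku, hinv]
      have hkv : κ v = f (x₁ + a₂) - y₁ := by rw [← hku]; linear_combination hQ
      have hv : v = κ (f (x₁ + a₂) - y₁) := by rw [← hkv, hinv]
      simp only [Sum.inl.injEq, Prod.mk.injEq]
      exact ⟨hu, hv⟩
  -- affine / infinity (∞)
  · refine ⟨Sum.inr (Sum.inl (κ x₁)), ⟨?_, ?_⟩, ?_⟩
    · simp only [shiftPolarity, mem_vertLine_inl, hinv]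
    · cases w₂; exact mem_vertLine_infty ()
    · rintro (⟨u, v⟩ | (c | w)) ⟨hQ, hR⟩ <;>
        simp only [shiftPolarity, mem_affLine_inl, mem_affLine_infty, mem_vertLine_inl,
          mem_lineAtInf_inl] at hQ hR
      simp only [Sum.inr.injEq, Sum.inl.injEq]
      rw [hQ, hinv]
  -- infinity point / affine
  · refine ⟨Sum.inl (κ a₁, κ (f (x₂ + a₁) - y₂)), ⟨?_, ?_⟩, ?_⟩
    · simp only [shiftPolarity, mem_affLine_inf, hinv]
    · simp only [shiftPolarity, mem_affLine_inl, hinv]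
      ring
    · rintro (⟨u, v⟩ | (c | w)) ⟨hQ, hR⟩ <;>
        simp only [shiftPolarity, mem_affLine_inl, mem_affLine_inf, mem_vertLine_inl,
          mem_vertLine_inf, mem_lineAtInf_inl] at hQ hR
      have hku : κ u = a₁ := hQ.symm
      have hu : u = κ a₁ := by rw [← hku, hinv]
      have hkv : κ v = f (x₂ + a₁) - y₂ := by rw [← hku]; linear_combination hR
      have hv : v = κ (f (x₂ + a₁) - y₂) := by rw [← hkv, hinv]
      simp only [Sum.inl.injEq, Prod.mk.injEq]
      exact ⟨hu, hv⟩
  -- infinity point / infinity point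
  · have ha : a₁ ≠ a₂ := fun h => hne (by rw [h])
    refine ⟨Sum.inr (Sum.inr ()), ⟨mem_lineAtInf_inr _, mem_lineAtInf_inr _⟩, ?_⟩
    rintro (⟨u, v⟩ | (c | w)) ⟨hQ, hR⟩ <;>
      simp only [shiftPolarity, mem_affLine_inf, mem_vertLine_inf] at hQ hR
    · exact absurd (hQ.trans hR.symm) ha
    · cases w; rfl
  -- infinity point / ∞
  · refine ⟨Sum.inr (Sum.inr ()), ⟨mem_lineAtInf_inr _, mem_lineAtInf_inr _⟩, ?_⟩
    rintro (⟨u, v⟩ | (c | w)) ⟨hQ, hR⟩ <;>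
      simp only [shiftPolarity, mem_affLine_inf, mem_affLine_infty, mem_vertLine_inf,
        mem_vertLine_infty] at hQ hR
    · cases w; rfl
  -- ∞ / affine
  · refine ⟨Sum.inr (Sum.inl (κ x₂)), ⟨?_, ?_⟩, ?_⟩
    · cases w₁; exact mem_vertLine_infty ()
    · simp only [shiftPolarity, mem_vertLine_inl, hinv]
    · rintro (⟨u, v⟩ | (c | w)) ⟨hQ, hR⟩ <;>
        simp only [shiftPolarity, mem_affLine_inl, mem_affLine_infty, mem_vertLine_inl,
          mem_lineAtInf_inl] at hQ hR
      simp only [Sum.inr.injEq, Sum.inl.injEq]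
      rw [hR, hinv]
  -- ∞ / infinity point
  · refine ⟨Sum.inr (Sum.inr ()), ⟨mem_lineAtInf_inr _, mem_lineAtInf_inr _⟩, ?_⟩
    rintro (⟨u, v⟩ | (c | w)) ⟨hQ, hR⟩ <;>
      simp only [shiftPolarity, mem_affLine_inf, mem_affLine_infty, mem_vertLine_inf,
        mem_vertLine_infty] at hQ hR
    · cases w; rfl
  -- ∞ / ∞
  · cases w₁; cases w₂; exact absurd rfl hne

open Finset in
include hplanar hadd hinv hcomm in
lemma partCount [Fintype K] {q : ℕ} (hcard : Fintype.card K = q ^ 2)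
    (hcount : ∀ x : K, {y : K | y + κ y = f (x + κ x)}.ncard = q) :
    (absSet K f κ).ncard = q ^ 3 + 1 ∧
    (∀ L ∈ shiftLines K f,
      (L ∩ absSet K f κ).ncard = 1 ∨ (L ∩ absSet K f κ).ncard = q + 1) := by
  classical
  set ρ := shiftPolarity K f κ with hρ
  -- each line has q² + 1 points
  have hlinecard : ∀ P : ShiftPt K, (ρ P).ncard = q ^ 2 + 1 := by
    have haff : ∀ a b : K, (affLine K f a b).ncard = q ^ 2 + 1 := by
      intro a b
      have he : affLine K f a b =
          Set.range (fun x : K => (Sum.inl (x, f (x + a) - b) : ShiftPt K)) ∪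
            {Sum.inr (Sum.inl a)} := by
        ext P; constructor
        · rintro (⟨x, rfl⟩ | rfl)
          · exact Or.inl ⟨x, rfl⟩
          · exact Or.inr rfl
        · rintro (⟨x, rfl⟩ | rfl)
          · exact Or.inl ⟨x, rfl⟩
          · exact Or.inr rfl
      rw [he, Set.ncard_union_eq (by simp), ← Set.image_univ,
        Set.ncard_image_of_injective _ (fun x y h => (Prod.ext_iff.mp (Sum.inl_injective h)).1),
        Set.ncard_univ, Nat.card_eq_fintype_card, hcard, Set.ncard_singleton]
    have hvert : ∀ a : K, (vertLine K a).ncard = q ^ 2 + 1 := by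
      intro a
      have he : vertLine K a =
          Set.range (fun y : K => (Sum.inl (a, y) : ShiftPt K)) ∪
            {Sum.inr (Sum.inr ())} := by
        ext P; constructor
        · rintro (⟨y, rfl⟩ | rfl)
          · exact Or.inl ⟨y, rfl⟩
          · exact Or.inr rfl
        · rintro (⟨y, rfl⟩ | rfl)
          · exact Or.inl ⟨y, rfl⟩
          · exact Or.inr rfl
      rw [he, Set.ncard_union_eq (by simp), ← Set.image_univ,
        Set.ncard_image_of_injective _ (fun x y h => (Prod.ext_iff.mp (Sum.inl_injective h)).2),
        Set.ncard_univ, Nat.card_eq_fintype_card, hcard, Set.ncard_singleton]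
    have hinf : (lineAtInf K).ncard = q ^ 2 + 1 := by
      have he : lineAtInf K = Set.range (Sum.inr : K ⊕ Unit → ShiftPt K) := by
        ext P; simp [lineAtInf, Set.range, eq_comm]
      rw [he, ← Set.image_univ, Set.ncard_image_of_injective _ Sum.inr_injective,
        Set.ncard_univ, Nat.card_eq_fintype_card]
      simp [hcard]
    rintro (⟨x, y⟩ | (a | u))
    · exact haff (κ x) (κ y)
    · exact hvert (κ a)
    · exact hinf
  -- the absolute set and its cardinality
  have habschar : ∀ P : ShiftPt K, P ∈ absSet K f κ ↔ P ∈ ρ P := by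
    intro P
    rw [← part6 hadd hinv hcomm]
    rfl
  have hUcard : (absSet K f κ).ncard = q ^ 3 + 1 := by
    have habs : absSet K f κ =
        (Sum.inl '' {p : K × K | p.2 + κ p.2 = f (p.1 + κ p.1)}) ∪
          {Sum.inr (Sum.inr ())} := by
      ext P
      constructor
      · rintro (⟨x, y, hxy, rfl⟩ | rfl)
        · exact Or.inl ⟨(x, y), hxy, rfl⟩
        · exact Or.inr rfl
      · rintro (⟨⟨x, y⟩, hxy, rfl⟩ | rfl)
        · exact Or.inl ⟨x, y, hxy, rfl⟩
        · exact Or.inr rfl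
    have hS : {p : K × K | p.2 + κ p.2 = f (p.1 + κ p.1)}.ncard = q ^ 3 := by
      rw [Set.ncard_eq_toFinset_card']
      have hSf : {p : K × K | p.2 + κ p.2 = f (p.1 + κ p.1)}.toFinset =
          univ.filter fun p : K × K => p.2 + κ p.2 = f (p.1 + κ p.1) := by
        ext p; simp
      rw [hSf]
      rw [Finset.card_eq_sum_card_fiberwise
        (f := Prod.fst) (t := univ) (fun x _ => mem_univ _)]
      have hfib : ∀ x : K,
          ((univ.filter fun p : K × K => p.2 + κ p.2 = f (p.1 + κ p.1)).filter
            fun p => p.1 = x).card = q := by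
        intro x
        have he : ((univ.filter fun p : K × K => p.2 + κ p.2 = f (p.1 + κ p.1)).filter
            fun p => p.1 = x) =
            (univ.filter fun y : K => y + κ y = f (x + κ x)).image fun y => (x, y) := by
          ext ⟨u, v⟩
          simp only [Finset.mem_filter, Finset.mem_image, Finset.mem_univ, true_and,
            Prod.mk.injEq]
          constructor
          · rintro ⟨h1, rfl⟩; exact ⟨v, h1, rfl, rfl⟩
          · rintro ⟨y, h1, rfl, rfl⟩; exact ⟨h1, rfl⟩
        rw [he, Finset.card_image_of_injective _ (fun u v h => by simpa using h)]
        have := hcount x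
        rwa [Set.ncard_eq_toFinset_card', Set.toFinset_setOf] at this
      rw [Finset.sum_congr rfl fun x _ => hfib x, Finset.sum_const, card_univ, hcard,
        smul_eq_mul]
      ring
    rw [habs, Set.ncard_union_eq (by simp),
      Set.ncard_image_of_injective _ Sum.inl_injective, hS, Set.ncard_singleton]
  -- Finset versions
  set U : Finset (ShiftPt K) := (absSet K f κ).toFinset with hU
  have hUc : U.card = q ^ 3 + 1 := by
    rw [hU, ← Set.ncard_eq_toFinset_card', hUcard]
  set A : ShiftPt K → Finset (ShiftPt K) := fun P => U.filter (· ∈ ρ P) with hA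
  have hlineFin : ∀ P : ShiftPt K, (ρ P).toFinset.card = q ^ 2 + 1 := fun P => by
    rw [← Set.ncard_eq_toFinset_card', hlinecard]
  -- First moment
  have hsum1 : ∑ P : ShiftPt K, (A P).card = (q ^ 3 + 1) * (q ^ 2 + 1) := by
    calc ∑ P : ShiftPt K, (A P).card
        = ∑ P : ShiftPt K, ∑ Q ∈ U, if Q ∈ ρ P then 1 else 0 := by
          refine Finset.sum_congr rfl fun P _ => ?_
          simp only [hA]
          exact Finset.card_filter _ _
      _ = ∑ Q ∈ U, ∑ P : ShiftPt K, if Q ∈ ρ P then 1 else 0 := Finset.sum_comm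
      _ = ∑ Q ∈ U, (univ.filter fun P => Q ∈ ρ P).card :=
          Finset.sum_congr rfl fun Q _ => (Finset.card_filter _ _).symm
      _ = ∑ Q ∈ U, (q ^ 2 + 1) := by
          refine Finset.sum_congr rfl fun Q _ => ?_
          have he : (univ.filter fun P => Q ∈ ρ P) = (ρ Q).toFinset := by
            ext P
            simp only [Finset.mem_filter, Finset.mem_univ, true_and, Set.mem_toFinset]
            exact part2 hadd hinv hcomm P Q
          rw [he, hlineFin]
      _ = (q ^ 3 + 1) * (q ^ 2 + 1) := by rw [Finset.sum_const, hUc, smul_eq_mul]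
  -- Second moment
  have hsum2 : ∑ P : ShiftPt K, ((A P).offDiag).card = (q ^ 3 + 1) * q ^ 3 := by
    have hoffd : ∀ P : ShiftPt K, (A P).offDiag =
        U.offDiag.filter fun z => z.1 ∈ ρ P ∧ z.2 ∈ ρ P := by
      intro P
      ext ⟨Q, R⟩
      simp only [Finset.mem_offDiag, Finset.mem_filter, hA]
      tauto
    calc ∑ P : ShiftPt K, ((A P).offDiag).card
        = ∑ P : ShiftPt K, ∑ z ∈ U.offDiag, if z.1 ∈ ρ P ∧ z.2 ∈ ρ P then 1 else 0 := by
          refine Finset.sum_congr rfl fun P _ => ?_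
          rw [hoffd P, Finset.card_filter]
      _ = ∑ z ∈ U.offDiag, ∑ P : ShiftPt K, if z.1 ∈ ρ P ∧ z.2 ∈ ρ P then 1 else 0 :=
          Finset.sum_comm
      _ = ∑ z ∈ U.offDiag, (univ.filter fun P => z.1 ∈ ρ P ∧ z.2 ∈ ρ P).card :=
          Finset.sum_congr rfl fun z _ => (Finset.card_filter _ _).symm
      _ = ∑ z ∈ U.offDiag, 1 := by
          refine Finset.sum_congr rfl fun z hz => ?_
          have hne : z.1 ≠ z.2 := (Finset.mem_offDiag.mp hz).2.2
          obtain ⟨P₀, hP₀, hP₀u⟩ := EU hadd hinv hcomm hplanar hne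
          rw [Finset.card_eq_one]
          refine ⟨P₀, ?_⟩
          ext P
          simp only [Finset.mem_filter, Finset.mem_univ, true_and, Finset.mem_singleton]
          exact ⟨fun h => hP₀u P h, fun h => h ▸ hP₀⟩
      _ = U.offDiag.card := by rw [Finset.sum_const, smul_eq_mul, mul_one]
      _ = (q ^ 3 + 1) * q ^ 3 := by rw [Finset.offDiag_card, hUc]; ring_nf; omega
  -- tangency at absolute points
  have htang : ∀ P ∈ U, (A P).card = 1 := by
    intro P hP
    have hPabs : P ∈ ρ P := (habschar P).mp (Set.mem_toFinset.mp hP)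
    rw [Finset.card_eq_one]
    refine ⟨P, ?_⟩
    ext Q
    simp only [hA, Finset.mem_filter, Finset.mem_singleton]
    constructor
    · rintro ⟨hQU, hQρ⟩
      by_contra hne
      have hQabs : Q ∈ ρ Q := (habschar Q).mp (Set.mem_toFinset.mp hQU)
      obtain ⟨P₀, hP₀, hP₀u⟩ := EU hadd hinv hcomm hplanar hne
      have h1 : P = P₀ := hP₀u P ⟨hQρ, hPabs⟩
      have h2 : Q = P₀ := hP₀u Q ⟨hQabs, part2 hadd hinv hcomm Q P |>.mpr hQρ⟩
      exact hne (h2.trans h1.symm)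
    · rintro rfl
      exact ⟨hP, hPabs⟩
  -- split into absolute and non-absolute points
  have hsplit1 := Finset.sum_filter_add_sum_filter_not univ (· ∈ U) fun P => (A P).card
  have hsplit2 := Finset.sum_filter_add_sum_filter_not univ (· ∈ U)
    fun P => ((A P).offDiag).card
  have hfU : univ.filter (· ∈ U) = U := by ext P; simp
  rw [hfU, hsum1] at hsplit1
  rw [hfU, hsum2] at hsplit2
  have hsU1 : ∑ P ∈ U, (A P).card = q ^ 3 + 1 := by
    rw [Finset.sum_congr rfl fun P hP => htang P hP, Finset.sum_const, hUc, smul_eq_mul,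
      mul_one]
  have hsU2 : ∑ P ∈ U, ((A P).offDiag).card = 0 := by
    refine Finset.sum_eq_zero fun P hP => ?_
    rw [Finset.offDiag_card, htang P hP]
    omega
  rw [hsU1] at hsplit1
  rw [hsU2] at hsplit2
  set T : Finset (ShiftPt K) := univ.filter (· ∉ U) with hT
  have hTcard : T.card + (q ^ 3 + 1) = q ^ 4 + q ^ 2 + 1 := by
    have h1 : U.card + T.card = Fintype.card (ShiftPt K) := by
      rw [← hfU, ← Finset.card_univ]
      exact Finset.card_filter_add_card_filter_not _
    have h2 : Fintype.card (ShiftPt K) = q ^ 4 + q ^ 2 + 1 := by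
      simp [Fintype.card_sum, Fintype.card_prod, hcard]
      ring
    omega
  have hST1 : ∑ P ∈ T, (A P).card = (q ^ 3 + 1) * q ^ 2 := by
    have : (q ^ 3 + 1) * (q ^ 2 + 1) = (q ^ 3 + 1) * q ^ 2 + (q ^ 3 + 1) := by ring
    omega
  have hST2 : ∑ P ∈ T, ((A P).offDiag).card = (q ^ 3 + 1) * q ^ 3 := by omega
  -- variance argument over ℤ
  have hcast : ∀ s : Finset (ShiftPt K),
      ((s.offDiag.card : ℤ)) = (s.card : ℤ) ^ 2 - s.card := by
    intro s
    rw [Finset.offDiag_card]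
    have h1 : s.card ≤ s.card * s.card := by
      rcases Nat.eq_zero_or_pos s.card with h | h
      · simp [h]
      · exact Nat.le_mul_of_pos_left _ h
    rw [Nat.cast_sub h1]
    push_cast
    ring
  have hTsum0 : ∑ P ∈ T, (((A P).card : ℤ) - (q + 1)) ^ 2 = 0 := by
    have hexp : ∀ P ∈ T, (((A P).card : ℤ) - (q + 1)) ^ 2 =
        ((A P).offDiag.card : ℤ) + (1 - 2 * (q + 1)) * ((A P).card : ℤ) + (q + 1) ^ 2 := by
      intro P _
      rw [hcast]
      ring
    rw [Finset.sum_congr rfl hexp, Finset.sum_add_distrib, Finset.sum_add_distrib,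
      ← Finset.mul_sum, Finset.sum_const, nsmul_eq_mul]
    have e1 : ∑ P ∈ T, ((A P).offDiag.card : ℤ) = ((q : ℤ) ^ 3 + 1) * q ^ 3 := by
      rw [← Nat.cast_sum, hST2]; push_cast; ring
    have e2 : ∑ P ∈ T, ((A P).card : ℤ) = ((q : ℤ) ^ 3 + 1) * q ^ 2 := by
      rw [← Nat.cast_sum, hST1]; push_cast; ring
    have e3 : (T.card : ℤ) + ((q : ℤ) ^ 3 + 1) = (q : ℤ) ^ 4 + q ^ 2 + 1 := by
      exact_mod_cast congrArg (Nat.cast : ℕ → ℤ) hTcard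
    rw [e1, e2]
    linear_combination ((q : ℤ) + 1) ^ 2 * e3
  have hnonabs : ∀ P ∈ T, (A P).card = q + 1 := by
    intro P hP
    have h0 := (Finset.sum_eq_zero_iff_of_nonneg fun Q _ => sq_nonneg _).mp hTsum0 P hP
    have h1 : ((A P).card : ℤ) = (q : ℤ) + 1 := by
      have h2 := sq_eq_zero_iff.mp h0
      linarith
    exact_mod_cast h1
  -- conclusion
  refine ⟨hUcard, ?_⟩
  intro L hL
  obtain ⟨P, rfl⟩ := part5 hinv L hL
  have hset : (shiftPolarity K f κ P ∩ absSet K f κ).toFinset = A P := by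
    ext Q
    simp only [Set.mem_toFinset, Set.mem_inter_iff, hA, Finset.mem_filter, hU,
      Set.mem_toFinset]
    tauto
  rw [Set.ncard_eq_toFinset_card', hset]
  by_cases hPU : P ∈ U
  · exact Or.inl (htang P hPU)
  · exact Or.inr (hnonabs P (by simp [hT, hPU]))
end S

/-- Lemma 4.1.  Let `f` be planar on `K = F_{q²}` and `κ` additive,
involutory, commuting with `f`, with exactly `q` elements `y` satisfying
`y + κ(y) = f(x + κ(x))` for each `x`.  Then (i) `y = f(u+x) − v` iff
`κ(v) = f(κ(x)+κ(u)) − κ(y)`; the map `ρ` is a polarity of `Π(f)` (an involutory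
incidence-reversing bijection between points and lines); (ii) its set of absolute
points is `U = {(x,y) : y + κ(y) = f(x + κ(x))} ∪ {(∞)}`, which has `q³+1`
elements and is a unital in `Π(f)` (the polarity is unitary). -/
theorem stmt18 (p n q : ℕ) (hp : Nat.Prime p) (hpodd : Odd p) (hn : 0 < n) (hq : q = p ^ n)
    (K : Type) [Field K] [Fintype K] (hcard : Fintype.card K = q ^ 2)
    (f : K → K)
    (hplanar : ∀ a : K, a ≠ 0 → Function.Bijective (fun x : K => f (x + a) - f x))
    (κ : K → K)
    (hadd : ∀ x y : K, κ (x + y) = κ x + κ y)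
    (hinv : ∀ x : K, κ (κ x) = x)
    (hcomm : ∀ x : K, κ (f x) = f (κ x))
    (hcount : ∀ x : K, {y : K | y + κ y = f (x + κ x)}.ncard = q) :
    (∀ x y u v : K, y = f (u + x) - v ↔ κ v = f (κ x + κ u) - κ y) ∧
    (∀ P Q : ShiftPt K, Q ∈ shiftPolarity K f κ P ↔ P ∈ shiftPolarity K f κ Q) ∧
    (∀ P : ShiftPt K, shiftPolarity K f κ P ∈ shiftLines K f) ∧
    Function.Injective (shiftPolarity K f κ) ∧
    (∀ L ∈ shiftLines K f, ∃ P : ShiftPt K, shiftPolarity K f κ P = L) ∧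
    {P : ShiftPt K | P ∈ shiftPolarity K f κ P} = absSet K f κ ∧
    (absSet K f κ).ncard = q ^ 3 + 1 ∧
    (∀ L ∈ shiftLines K f,
      (L ∩ absSet K f κ).ncard = 1 ∨ (L ∩ absSet K f κ).ncard = q + 1) := by
  refine ⟨part1 hadd hinv hcomm, part2 hadd hinv hcomm, part3 hinv, part4 hinv,
    part5 hinv, part6 hadd hinv hcomm,
    (partCount hadd hinv hcomm hplanar hcard hcount).1,
    (partCount hadd hinv hcomm hplanar hcard hcount).2⟩
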